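/- Let (R, P, X) be a subproblem where R is a clique and every vertex of P ∪ X is adjacent to all of R. If u ∈ P satisfies N(u) ∩ P = ∅ and N(u) ∩ X ≠ ∅, then R ∪ {u} is not a maximal clique of G, and the maximal cliques of G of the form R ∪ S with S ⊆ P coincide with those with S ⊆ P \ {u}. -/

import Mathlib

open SimpleGraph

/-- A maximal clique: a clique not properly contained in any other clique. -/
def MaximalClique {V : Type*} (G : SimpleGraph V) (S : Set V) : Prop :=
  G.IsClique S ∧ ∀ T : Set V, G.IsClique T → S ⊆ T → S = T

/-- The graph obtained from `G` by deleting vertex `u` (removing all its incident edges). -/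
def delVert {V : Type*} (G : SimpleGraph V) (u : V) : SimpleGraph V where
  Adj a b := G.Adj a b ∧ a ≠ u ∧ b ≠ u
  symm := by constructor; intro a b h; exact ⟨h.1.symm, h.2.2, h.2.1⟩
  loopless := by constructor; intro a h; exact (G.ne_of_adj h.1) rfl

/-! A neighbour of `u` in `X` is adjacent to all of `R ∪ {u}`, so that clique extends. Since `u` has
no neighbour in `P`, a clique `R ∪ S` with `u ∈ S ⊆ P` has `S = {u}`, so it is not maximal either. -/

namespace SimpleGraph

variable {V : Type*} {G : SimpleGraph V}

theorem not_maximalClique_of_forall_adj {C : Set V} {a : V} (ha : ∀ c ∈ C, G.Adj a c) :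
    ¬ MaximalClique G C := by
  rintro ⟨hC, hmax⟩
  have haC : a ∉ C := fun h => G.loopless.irrefl a (ha a h)
  have hCa : C = insert a C := hmax _ (hC.insert fun c hc _ => ha c hc) (Set.subset_insert a C)
  exact haC (hCa ▸ Set.mem_insert a C)

theorem IsClique.eq_singleton_of_neighborSet_inter_eq_empty {S P : Set V} {u : V}
    (hS : G.IsClique S) (hSP : S ⊆ P) (hu : u ∈ S) (hP : G.neighborSet u ∩ P = ∅) :
    S = {u} := by
  refine Set.eq_singleton_iff_unique_mem.2 ⟨hu, fun s hs => ?_⟩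
  by_contra hsu
  have hus : s ∈ G.neighborSet u ∩ P := ⟨hS hu hs (Ne.symm hsu), hSP hs⟩
  simp [hP] at hus

end SimpleGraph

theorem stmt_8_general {V : Type*} (G : SimpleGraph V) (R P X : Set V)
    (hadj : ∀ x ∈ P ∪ X, ∀ r ∈ R, G.Adj x r)
    (u : V)
    (hP : G.neighborSet u ∩ P = ∅) (hX : (G.neighborSet u ∩ X).Nonempty) :
    ¬ MaximalClique G (R ∪ {u}) ∧
    {C : Set V | ∃ S ⊆ P, C = R ∪ S ∧ MaximalClique G C} =
      {C : Set V | ∃ S ⊆ P \ {u}, C = R ∪ S ∧ MaximalClique G C} := by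
  obtain ⟨x, hux, hxX⟩ := hX
  have hRu : ¬ MaximalClique G (R ∪ {u}) := by
    refine not_maximalClique_of_forall_adj (a := x) ?_
    rintro c (hcR | rfl)
    · exact hadj x (Or.inr hxX) c hcR
    · exact hux.symm
  refine ⟨hRu, Set.ext fun C => ⟨?_, ?_⟩⟩
  · rintro ⟨S, hSP, rfl, hmax⟩
    refine ⟨S, fun s hs => ⟨hSP hs, ?_⟩, rfl, hmax⟩
    rintro rfl
    have hS : S = {s} :=
      (hmax.1.subset Set.subset_union_right).eq_singleton_of_neighborSet_inter_eq_empty hSP hs hP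
    exact hRu (hS ▸ hmax)
  · rintro ⟨S, hSP, rfl, hmax⟩
    exact ⟨S, hSP.trans Set.sdiff_subset, rfl, hmax⟩

theorem stmt_8 {V : Type*} [Fintype V] (G : SimpleGraph V) (R P X : Set V)
    (hR : G.IsClique R)
    (hadj : ∀ x ∈ P ∪ X, ∀ r ∈ R, G.Adj x r)
    (hdisj : Disjoint P X)
    (u : V) (hu : u ∈ P)
    (hP : G.neighborSet u ∩ P = ∅) (hX : (G.neighborSet u ∩ X).Nonempty) :
    ¬ MaximalClique G (R ∪ {u}) ∧
    {C : Set V | ∃ S ⊆ P, C = R ∪ S ∧ MaximalClique G C} =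
      {C : Set V | ∃ S ⊆ P \ {u}, C = R ∪ S ∧ MaximalClique G C} :=
  stmt_8_general G R P X hadj u hP hX
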